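/- arXiv:1603.01413 — 8 statements merged into one kernel-verified Lean document; each statement's English description precedes it below -/
import Mathlib

section
/- Let a, b, c : ℝ → ℝ and let x₁, x₂, x₃ : ℝ → ℝ be differentiable functions satisfying the Riccati equation xᵢ'(t) = a(t) + b(t)·xᵢ(t) + c(t)·xᵢ(t)² for all t ∈ ℝ and i = 1,2,3. Let k ∈ ℝ and suppose the denominator D(t) := x₃(t) − x₂(t) + k·(x₃(t) − x₁(t)) is nonzero for every t ∈ ℝ. Then the function x(t) := (x₁(t)·(x₃(t) − x₂(t)) + k·x₂(t)·(x₃(t) − x₁(t))) / D(t) is differentiable and satisfies x'(t) = a(t) + b(t)·x(t) + c(t)·x(t)² for all t ∈ ℝ. -/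
/-!
The quotient rule turns `x = N / D` into `x' = (N' D - N D') / D²`, so `x` solves the Riccati
equation `x' = a + b x + c x²` exactly when `N' D - N D' = a D² + b N D + c N²`. For the
superposition numerator and denominator, with `N'` and `D'` computed from the Riccati equations
of `x₁, x₂, x₃`, this is a polynomial identity in `a, b, c, k, x₁, x₂, x₃`.
-/

def riccatiField {R : Type*} [CommRing R] (a b c y : R) : R := a + b * y + c * y ^ 2

theorem riccati_superposition_identity {R : Type*} [CommRing R] (a b c k y₁ y₂ y₃ : R) :
    let r := riccatiField a b c
    let N := y₁ * (y₃ - y₂) + k * y₂ * (y₃ - y₁)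
    let D := y₃ - y₂ + k * (y₃ - y₁)
    (r y₁ * (y₃ - y₂) + y₁ * (r y₃ - r y₂) + (k * r y₂ * (y₃ - y₁) + k * y₂ * (r y₃ - r y₁))) * D
        - N * (r y₃ - r y₂ + k * (r y₃ - r y₁)) =
      a * D ^ 2 + b * N * D + c * N ^ 2 := by
  simp only [riccatiField]
  ring

section

variable {𝕜 : Type*} [NontriviallyNormedField 𝕜]

theorem HasDerivAt.div_riccatiField {N D : 𝕜 → 𝕜} {N' D' a b c t : 𝕜}
    (hN : HasDerivAt N N' t) (hD : HasDerivAt D D' t) (hD₀ : D t ≠ 0)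
    (h : N' * D t - N t * D' = a * D t ^ 2 + b * N t * D t + c * N t ^ 2) :
    HasDerivAt (fun s => N s / D s) (riccatiField a b c (N t / D t)) t := by
  refine (hN.div hD hD₀).congr_deriv ?_
  rw [h, riccatiField]
  field_simp

theorem HasDerivAt.riccati_superposition {x₁ x₂ x₃ : 𝕜 → 𝕜} {a b c k t : 𝕜}
    (h₁ : HasDerivAt x₁ (riccatiField a b c (x₁ t)) t)
    (h₂ : HasDerivAt x₂ (riccatiField a b c (x₂ t)) t)
    (h₃ : HasDerivAt x₃ (riccatiField a b c (x₃ t)) t)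
    (hD : x₃ t - x₂ t + k * (x₃ t - x₁ t) ≠ 0) :
    HasDerivAt
      (fun s => (x₁ s * (x₃ s - x₂ s) + k * x₂ s * (x₃ s - x₁ s)) /
        (x₃ s - x₂ s + k * (x₃ s - x₁ s)))
      (riccatiField a b c ((x₁ t * (x₃ t - x₂ t) + k * x₂ t * (x₃ t - x₁ t)) /
        (x₃ t - x₂ t + k * (x₃ t - x₁ t)))) t :=
  (((h₁.mul (h₃.sub h₂)).add ((h₂.const_mul k).mul (h₃.sub h₁)))).div_riccatiField
    ((h₃.sub h₂).add ((h₃.sub h₁).const_mul k)) hD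
    (riccati_superposition_identity a b c k (x₁ t) (x₂ t) (x₃ t))

end

/-- The classical superposition rule for the real Riccati equation:
given three particular solutions `x₁, x₂, x₃` and a constant `k`, the combination
`x = (x₁(x₃ - x₂) + k x₂(x₃ - x₁)) / (x₃ - x₂ + k(x₃ - x₁))` is again a solution. -/
theorem riccati_superposition_rule
    (a b c x₁ x₂ x₃ : ℝ → ℝ) (k : ℝ)
    (h₁ : ∀ t, HasDerivAt x₁ (a t + b t * x₁ t + c t * (x₁ t) ^ 2) t)
    (h₂ : ∀ t, HasDerivAt x₂ (a t + b t * x₂ t + c t * (x₂ t) ^ 2) t)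
    (h₃ : ∀ t, HasDerivAt x₃ (a t + b t * x₃ t + c t * (x₃ t) ^ 2) t)
    (hD : ∀ t, x₃ t - x₂ t + k * (x₃ t - x₁ t) ≠ 0) :
    ∀ t, HasDerivAt
      (fun t => (x₁ t * (x₃ t - x₂ t) + k * x₂ t * (x₃ t - x₁ t)) /
        (x₃ t - x₂ t + k * (x₃ t - x₁ t)))
      (a t + b t * ((x₁ t * (x₃ t - x₂ t) + k * x₂ t * (x₃ t - x₁ t)) /
          (x₃ t - x₂ t + k * (x₃ t - x₁ t))) +
        c t * ((x₁ t * (x₃ t - x₂ t) + k * x₂ t * (x₃ t - x₁ t)) /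
          (x₃ t - x₂ t + k * (x₃ t - x₁ t))) ^ 2) t := fun t =>
  HasDerivAt.riccati_superposition (h₁ t) (h₂ t) (h₃ t) (hD t)
end

section
/- Let a, b, c : ℝ → ℝ and let x, x₁, x₂, x₃ : ℝ → ℝ be differentiable functions each satisfying the Riccati equation y'(t) = a(t) + b(t)·y(t) + c(t)·y(t)² for all t ∈ ℝ. Suppose that x₂(t) − x(t) ≠ 0 and x₃(t) − x₁(t) ≠ 0 for every t ∈ ℝ. Then the cross-ratio k(t) := ((x(t) − x₁(t))·(x₃(t) − x₂(t))) / ((x₂(t) − x(t))·(x₃(t) − x₁(t))) is constant, i.e. its derivative is identically zero on ℝ. -/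
/-!
The difference of two solutions of `y' = a + b y + c y²` satisfies the linear equation
`(x - y)' = (b + c (x + y)) (x - y)`. Hence both products of differences in the cross-ratio
grow at the same rate `2b + c (x + x₁ + x₂ + x₃)`, and their quotient has derivative zero.
-/

section

variable {𝕜 : Type*} [NontriviallyNormedField 𝕜] {f g x y : 𝕜 → 𝕜} {r s : 𝕜} {t : 𝕜}

theorem HasDerivAt.mul_of_rates (hf : HasDerivAt f (f t * r) t) (hg : HasDerivAt g (g t * s) t) :
    HasDerivAt (fun t => f t * g t) (f t * g t * (r + s)) t :=
  (hf.mul hg).congr_deriv (by ring)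

theorem HasDerivAt.div_of_same_rate (hf : HasDerivAt f (f t * s) t)
    (hg : HasDerivAt g (g t * s) t) (hg₀ : g t ≠ 0) :
    HasDerivAt (fun t => f t / g t) 0 t :=
  (hf.div hg hg₀).congr_deriv (by ring)

theorem riccati_hasDerivAt_sub {a b c : 𝕜}
    (hx : HasDerivAt x (a + b * x t + c * x t ^ 2) t)
    (hy : HasDerivAt y (a + b * y t + c * y t ^ 2) t) :
    HasDerivAt (fun t => x t - y t) ((x t - y t) * (b + c * (x t + y t))) t :=
  (hx.sub hy).congr_deriv (by ring)

end

/-- The cross-ratio of four solutions of one and the same real Riccati equation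
is constant in time. -/
theorem riccati_crossRatio_constant
    (a b c x x₁ x₂ x₃ : ℝ → ℝ)
    (hx : ∀ t, HasDerivAt x (a t + b t * x t + c t * (x t) ^ 2) t)
    (h₁ : ∀ t, HasDerivAt x₁ (a t + b t * x₁ t + c t * (x₁ t) ^ 2) t)
    (h₂ : ∀ t, HasDerivAt x₂ (a t + b t * x₂ t + c t * (x₂ t) ^ 2) t)
    (h₃ : ∀ t, HasDerivAt x₃ (a t + b t * x₃ t + c t * (x₃ t) ^ 2) t)
    (hd₁ : ∀ t, x₂ t - x t ≠ 0)
    (hd₂ : ∀ t, x₃ t - x₁ t ≠ 0) :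
    ∀ t, deriv (fun t => ((x t - x₁ t) * (x₃ t - x₂ t)) /
      ((x₂ t - x t) * (x₃ t - x₁ t))) t = 0 := by
  intro t
  have hnum := (riccati_hasDerivAt_sub (hx t) (h₁ t)).mul_of_rates
    (riccati_hasDerivAt_sub (h₃ t) (h₂ t))
  have hden := (riccati_hasDerivAt_sub (h₂ t) (hx t)).mul_of_rates
    (riccati_hasDerivAt_sub (h₃ t) (h₁ t))
  have hrate : b t + c t * (x₂ t + x t) + (b t + c t * (x₃ t + x₁ t)) =
      b t + c t * (x t + x₁ t) + (b t + c t * (x₃ t + x₂ t)) := by ring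
  rw [hrate] at hden
  exact (hnum.div_of_same_rate hden (mul_ne_zero (hd₁ t) (hd₂ t))).deriv
end

section
/- Let a, b, c : ℝ → ℝ, let T > 0, and let x, x₁, x₂, x₃ : ℝ → ℝ be differentiable functions each satisfying the Riccati equation y'(t) = a(t) + b(t)·y(t) + c(t)·y(t)² for all t ∈ ℝ. Assume x₁, x₂, x₃ are T-periodic (xᵢ(t + T) = xᵢ(t) for all t) and that at every t ∈ ℝ the four values x(t), x₁(t), x₂(t), x₃(t) are pairwise distinct. Then x is T-periodic: x(t + T) = x(t) for all t ∈ ℝ. -/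
/-! The cross-ratio of four solutions of a Riccati equation is a first integral: the difference
`y - z` of two solutions satisfies the linear equation `(y - z)' = (y - z) (b + c (y + z))`, so the
numerator and the denominator of the cross-ratio have the same logarithmic derivative. Shifting
by a period fixes three of the four solutions, hence fixes the cross-ratio, and a Möbius
transformation is injective, so the fourth solution is fixed too. -/

def crossRatio {K : Type*} [Field K] (p q r s : K) : K :=
  (p - r) * (q - s) / ((p - s) * (q - r))

theorem eq_of_crossRatio_eq {K : Type*} [Field K] {p p' q r s : K}
    (hps : p ≠ s) (hp's : p' ≠ s) (hqr : q ≠ r) (hqs : q ≠ s) (hrs : r ≠ s)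
    (h : crossRatio p q r s = crossRatio p' q r s) : p = p' := by
  unfold crossRatio at h
  rw [div_eq_div_iff (by simp [sub_ne_zero, *]) (by simp [sub_ne_zero, *])] at h
  have key : (p - p') * (r - s) * ((q - s) * (q - r)) = 0 := by linear_combination h
  simpa [sub_eq_zero, hrs, hqs, hqr] using key

section Riccati

variable {𝕜 : Type*}

def IsRiccatiSolution [NontriviallyNormedField 𝕜] (a b c y : 𝕜 → 𝕜) : Prop :=
  ∀ t, HasDerivAt y (a t + b t * y t + c t * y t ^ 2) t

variable {a b c x₀ x₁ x₂ x₃ : 𝕜 → 𝕜}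

theorem IsRiccatiSolution.hasDerivAt_sub [NontriviallyNormedField 𝕜] {y z : 𝕜 → 𝕜}
    (hy : IsRiccatiSolution a b c y) (hz : IsRiccatiSolution a b c z) (t : 𝕜) :
    HasDerivAt (fun t ↦ y t - z t) ((y t - z t) * (b t + c t * (y t + z t))) t :=
  ((hy t).sub (hz t)).congr_deriv (by ring)

theorem IsRiccatiSolution.hasDerivAt_crossRatio [NontriviallyNormedField 𝕜]
    (h₀ : IsRiccatiSolution a b c x₀) (h₁ : IsRiccatiSolution a b c x₁)
    (h₂ : IsRiccatiSolution a b c x₂) (h₃ : IsRiccatiSolution a b c x₃) {t : 𝕜}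
    (h₀₃ : x₀ t ≠ x₃ t) (h₁₂ : x₁ t ≠ x₂ t) :
    HasDerivAt (fun t ↦ crossRatio (x₀ t) (x₁ t) (x₂ t) (x₃ t)) 0 t := by
  have hnum := (h₀.hasDerivAt_sub h₂ t).fun_mul (h₁.hasDerivAt_sub h₃ t)
  have hden := (h₀.hasDerivAt_sub h₃ t).fun_mul (h₁.hasDerivAt_sub h₂ t)
  have hden_ne : (x₀ t - x₃ t) * (x₁ t - x₂ t) ≠ 0 :=
    mul_ne_zero (sub_ne_zero.mpr h₀₃) (sub_ne_zero.mpr h₁₂)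
  exact (hnum.fun_div hden hden_ne).congr_deriv (by rw [div_eq_zero_iff]; left; ring)

theorem IsRiccatiSolution.crossRatio_eq [RCLike 𝕜]
    (h₀ : IsRiccatiSolution a b c x₀) (h₁ : IsRiccatiSolution a b c x₁)
    (h₂ : IsRiccatiSolution a b c x₂) (h₃ : IsRiccatiSolution a b c x₃)
    (h₀₃ : ∀ t, x₀ t ≠ x₃ t) (h₁₂ : ∀ t, x₁ t ≠ x₂ t) (s t : 𝕜) :
    crossRatio (x₀ s) (x₁ s) (x₂ s) (x₃ s) = crossRatio (x₀ t) (x₁ t) (x₂ t) (x₃ t) :=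
  have hderiv (u : 𝕜) := h₀.hasDerivAt_crossRatio h₁ h₂ h₃ (h₀₃ u) (h₁₂ u)
  is_const_of_deriv_eq_zero (fun u ↦ (hderiv u).differentiableAt) (fun u ↦ (hderiv u).deriv) s t

end Riccati

theorem riccati_periodic_of_three_periodic_solutions_general
    (a b c x x₁ x₂ x₃ : ℝ → ℝ) (T : ℝ)
    (hx : ∀ t, HasDerivAt x (a t + b t * x t + c t * (x t) ^ 2) t)
    (h₁ : ∀ t, HasDerivAt x₁ (a t + b t * x₁ t + c t * (x₁ t) ^ 2) t)
    (h₂ : ∀ t, HasDerivAt x₂ (a t + b t * x₂ t + c t * (x₂ t) ^ 2) t)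
    (h₃ : ∀ t, HasDerivAt x₃ (a t + b t * x₃ t + c t * (x₃ t) ^ 2) t)
    (hp₁ : ∀ t, x₁ (t + T) = x₁ t)
    (hp₂ : ∀ t, x₂ (t + T) = x₂ t)
    (hp₃ : ∀ t, x₃ (t + T) = x₃ t)
    (hdist : ∀ t, [x t, x₁ t, x₂ t, x₃ t].Pairwise (· ≠ ·)) :
    ∀ t, x (t + T) = x t := by
  have hne (t : ℝ) : x t ≠ x₃ t ∧ x₁ t ≠ x₂ t ∧ x₁ t ≠ x₃ t ∧ x₂ t ≠ x₃ t := by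
    have := hdist t
    simp only [List.pairwise_cons, List.mem_cons, List.not_mem_nil, or_false, forall_eq_or_imp,
      forall_eq] at this
    tauto
  intro t
  have hcr := IsRiccatiSolution.crossRatio_eq hx h₁ h₂ h₃ (fun t ↦ (hne t).1)
    (fun t ↦ (hne t).2.1) (t + T) t
  rw [hp₁, hp₂, hp₃] at hcr
  obtain ⟨hx₃, h₁₂, h₁₃, h₂₃⟩ := hne t
  have hTx₃ : x (t + T) ≠ x₃ t := hp₃ t ▸ (hne (t + T)).1
  exact eq_of_crossRatio_eq hTx₃ hx₃ h₁₂ h₁₃ h₂₃ hcr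

/-- If a real Riccati equation has three `T`-periodic particular solutions, then any
further solution staying pairwise distinct from them is also `T`-periodic. -/
theorem riccati_periodic_of_three_periodic_solutions
    (a b c x x₁ x₂ x₃ : ℝ → ℝ) (T : ℝ) (hT : 0 < T)
    (hx : ∀ t, HasDerivAt x (a t + b t * x t + c t * (x t) ^ 2) t)
    (h₁ : ∀ t, HasDerivAt x₁ (a t + b t * x₁ t + c t * (x₁ t) ^ 2) t)
    (h₂ : ∀ t, HasDerivAt x₂ (a t + b t * x₂ t + c t * (x₂ t) ^ 2) t)
    (h₃ : ∀ t, HasDerivAt x₃ (a t + b t * x₃ t + c t * (x₃ t) ^ 2) t)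
    (hp₁ : ∀ t, x₁ (t + T) = x₁ t)
    (hp₂ : ∀ t, x₂ (t + T) = x₂ t)
    (hp₃ : ∀ t, x₃ (t + T) = x₃ t)
    (hdist : ∀ t, [x t, x₁ t, x₂ t, x₃ t].Pairwise (· ≠ ·)) :
    ∀ t, x (t + T) = x t :=
  riccati_periodic_of_three_periodic_solutions_general a b c x x₁ x₂ x₃ T hx h₁ h₂ h₃ hp₁ hp₂ hp₃
    hdist
end

section
/- For all quaternions a, c ∈ ℍ: a * c * a = (2·⟪star c, a⟫) • a − (‖a‖²) • star c, where ⟪·,·⟫ is the real inner product on ℍ and star is quaternion conjugation. -/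
open scoped Quaternion RealInnerProductSpace

/-- For quaternions, the quadratic term of a Riccati equation rewrites in conformal form:
`a·c·a = 2⟪c*, a⟫ a − ‖a‖² c*`. -/
theorem quaternion_quadratic_conformal_form (a c : ℍ[ℝ]) :
    a * c * a = (2 * ⟪star c, a⟫) • a - (‖a‖ ^ 2) • star c := by
  have h : (‖a‖ ^ 2 : ℝ) = Quaternion.normSq a := by
    rw [sq, ← Quaternion.normSq_eq_norm_mul_self]
  rw [Quaternion.inner_def, h]
  ext <;>
    simp [Quaternion.re_mul, Quaternion.imI_mul, Quaternion.imJ_mul, Quaternion.imK_mul,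
      Quaternion.normSq_def'] <;>
    ring
end

section
/- For all quaternions a, b, c, d, x ∈ ℍ the following identity holds: a + b*x + x*c + x*d*x = a + ((b.re + c.re)) • x + ((b − (b.re : ℍ)) * x + x * (c − (c.re : ℍ))) + (‖x‖²) • (−star d) − (2·⟪−star d, x⟫) • x. Consequently, every quaternionic Riccati equation dq/dt = a(t) + b(t)q + q c(t) + q d(t) q is, in Euclidean coordinates on ℍ ≅ ℝ⁴, a conformal Riccati equation dξ/dt = a(t) + λ(t)ξ + Ω(t)ξ + e(t)⟨ξ,ξ⟩ − 2⟨e(t),ξ⟩ξ with λ(t) = b(t).re + c(t).re, Ω(t)ξ = (b(t) − b(t).re)·ξ + ξ·(c(t) − c(t).re), and e(t) = −star d(t). -/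
open scoped Quaternion RealInnerProductSpace

/-- Every quaternionic Riccati equation `dq/dt = a + b q + q c + q d q` is a conformal
Riccati equation: its right-hand side decomposes as a constant term, a dilation term
with factor `λ = b.re + c.re`, a rotation term `Ω(x) = im(b)·x + x·im(c)`, and the
conformal quadratic term with `e = −d*`. -/
theorem quaternionRiccati_is_conformalRiccati (a b c d x : ℍ[ℝ]) :
    a + b * x + x * c + x * d * x =
      a + (b.re + c.re) • x + ((b - (b.re : ℍ[ℝ])) * x + x * (c - (c.re : ℍ[ℝ])))
        + (‖x‖ ^ 2) • (-star d) - (2 * ⟪-star d, x⟫) • x := by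
  have h1 : ‖x‖ ^ 2 = Quaternion.normSq x := by
    rw [sq, ← Quaternion.normSq_eq_norm_mul_self]
  have h2 : ⟪-star d, x⟫ = (-star d * star x).re := rfl
  rw [h1, h2]
  ext <;> simp [Quaternion.normSq_def', Quaternion.re_mul, Quaternion.imI_mul,
    Quaternion.imJ_mul, Quaternion.imK_mul] <;> ring
end

section
/- Let p : ℝ → ℍ be a function with p(t).re = 0 for all t, and let q : ℝ → ℍ be differentiable with q'(t) = p(t) * q(t) for all t ∈ ℝ. Then ‖q(t)‖ = ‖q(0)‖ for all t ∈ ℝ; equivalently, the function t ↦ ‖q(t)‖² is constant. -/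
open scoped Quaternion RealInnerProductSpace

theorem Quaternion.inner_mul_self_right (p q : ℍ[ℝ]) : ⟪p * q, q⟫ = p.re * Quaternion.normSq q := by
  rw [Quaternion.inner_def, mul_assoc, Quaternion.self_mul_star, Quaternion.mul_coe_eq_smul,
    Quaternion.re_smul, smul_eq_mul, mul_comm]

theorem norm_eq_norm_of_hasDerivAt_of_inner_eq_zero {E : Type*} [NormedAddCommGroup E]
    [InnerProductSpace ℝ E] {f f' : ℝ → E} (hf : ∀ t, HasDerivAt f (f' t) t)
    (horth : ∀ t, ⟪f t, f' t⟫ = 0) (s t : ℝ) : ‖f s‖ = ‖f t‖ := by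
  have hderiv (t : ℝ) : HasDerivAt (‖f ·‖ ^ 2) 0 t := by
    simpa [horth t] using (hf t).norm_sq
  have hsq : ‖f s‖ ^ 2 = ‖f t‖ ^ 2 :=
    is_const_of_deriv_eq_zero (fun t ↦ (hderiv t).differentiableAt) (fun t ↦ (hderiv t).deriv) s t
  exact (pow_left_inj₀ (norm_nonneg _) (norm_nonneg _) two_ne_zero).mp hsq

/-- The norm is a first integral of the flow of the time-dependent linear vector field
`q ↦ p(t)·q` on `ℍ` when `p(t)` is pure imaginary for every `t`. -/
theorem quaternion_norm_constant_of_pure_linear_flow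
    (p q : ℝ → ℍ[ℝ])
    (hp : ∀ t, (p t).re = 0)
    (hq : ∀ t, HasDerivAt q (p t * q t) t) :
    ∀ t, ‖q t‖ = ‖q 0‖ := by
  have horth (t : ℝ) : ⟪q t, p t * q t⟫ = 0 := by
    rw [real_inner_comm, Quaternion.inner_mul_self_right, hp t, zero_mul]
  exact fun t ↦ norm_eq_norm_of_hasDerivAt_of_inner_eq_zero hq horth t 0
end

section
/- Let a₁₁, a₁₂, a₂₁, a₂₂ : ℝ → ℍ and let q₁, q₂ : ℝ → ℍ be differentiable functions with q₂(t) ≠ 0 for all t, satisfying the linear system q₁'(t) = a₁₁(t)·q₁(t) + a₁₂(t)·q₂(t) and q₂'(t) = −a₂₁(t)·q₁(t) − a₂₂(t)·q₂(t). Then q(t) := q₁(t) * (q₂(t))⁻¹ is differentiable and satisfies the quaternionic Riccati equation q'(t) = a₁₂(t) + a₁₁(t)·q(t) + q(t)·a₂₂(t) + q(t)·a₂₁(t)·q(t) for all t ∈ ℝ. -/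
/-!
Quotient rule in a noncommutative normed division algebra: `(q₁ q₂⁻¹)' = q₁' q₂⁻¹ - q q₂' q₂⁻¹`
with `q = q₁ q₂⁻¹`. Substituting the linear system, every `q₂` cancels against a `q₂⁻¹` on its
right, leaving the Riccati right-hand side.
-/

open scoped Quaternion

section QuotientRule

variable {𝕜 R : Type*} [NontriviallyNormedField 𝕜] [NormedDivisionRing R] [NormedAlgebra 𝕜 R]
  {f g : 𝕜 → R} {f' g' : R} {x : 𝕜}

theorem HasDerivAt.inv' (hg : HasDerivAt g g' x) (hx : g x ≠ 0) :
    HasDerivAt (fun y => (g y)⁻¹) (-((g x)⁻¹ * g' * (g x)⁻¹)) x := by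
  simpa [Function.comp_def] using (hasFDerivAt_inv' (𝕜 := 𝕜) hx).comp_hasDerivAt x hg

theorem HasDerivAt.mul_inv' (hf : HasDerivAt f f' x) (hg : HasDerivAt g g' x) (hx : g x ≠ 0) :
    HasDerivAt (fun y => f y * (g y)⁻¹) (f' * (g x)⁻¹ - f x * (g x)⁻¹ * g' * (g x)⁻¹) x := by
  convert hf.fun_mul (hg.inv' hx) using 1
  noncomm_ring

end QuotientRule

theorem linear_system_mul_inv_eq_riccati {D : Type*} [DivisionRing D]
    (a₁₁ a₁₂ a₂₁ a₂₂ q₁ q₂ : D) (hq₂ : q₂ ≠ 0) :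
    (a₁₁ * q₁ + a₁₂ * q₂) * q₂⁻¹ - q₁ * q₂⁻¹ * (-(a₂₁ * q₁) - a₂₂ * q₂) * q₂⁻¹ =
      a₁₂ + a₁₁ * (q₁ * q₂⁻¹) + q₁ * q₂⁻¹ * a₂₂ + q₁ * q₂⁻¹ * a₂₁ * (q₁ * q₂⁻¹) := by
  have hc : q₂ * q₂⁻¹ = 1 := mul_inv_cancel₀ hq₂
  simp only [add_mul, sub_mul, neg_mul, mul_sub, mul_neg, mul_assoc, hc, mul_one]
  abel

/-- Projection of a linear system on `ℍ² \ {0}` to the quaternionic Riccati equation: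
if `(q₁, q₂)` solves the linear system and `q₂` never vanishes, then `q = q₁ q₂⁻¹`
solves `q' = a₁₂ + a₁₁ q + q a₂₂ + q a₂₁ q`. -/
theorem quaternion_linear_system_projects_to_riccati
    (a₁₁ a₁₂ a₂₁ a₂₂ : ℝ → ℍ[ℝ]) (q₁ q₂ : ℝ → ℍ[ℝ])
    (hq₂ : ∀ t, q₂ t ≠ 0)
    (h₁ : ∀ t, HasDerivAt q₁ (a₁₁ t * q₁ t + a₁₂ t * q₂ t) t)
    (h₂ : ∀ t, HasDerivAt q₂ (-(a₂₁ t * q₁ t) - a₂₂ t * q₂ t) t) :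
    ∀ t, HasDerivAt (fun t => q₁ t * (q₂ t)⁻¹)
      (a₁₂ t + a₁₁ t * (q₁ t * (q₂ t)⁻¹) + (q₁ t * (q₂ t)⁻¹) * a₂₂ t
        + (q₁ t * (q₂ t)⁻¹) * a₂₁ t * (q₁ t * (q₂ t)⁻¹)) t := fun t =>
  ((h₁ t).mul_inv' (h₂ t) (hq₂ t)).congr_deriv <|
    linear_system_mul_inv_eq_riccati _ _ _ _ _ _ (hq₂ t)
end

section
/- On the half-plane {(x, ρ) ∈ ℝ² : ρ > 0}, consider the vector fields X⁻ := (1, 0), X⁰ := (x, ρ), X⁺ := (x² − ρ², 2xρ) and the functions f⁻ := −1/ρ, f⁰ := −x/ρ, f⁺ := −(x² + ρ²)/ρ. Then each Xᵅ is Hamiltonian with Hamiltonian function fᵅ with respect to the symplectic form ω = (dx ∧ dρ)/ρ²; explicitly, for all (x, ρ) with ρ > 0 and each α ∈ {−, 0, +}: ∂fᵅ/∂x = −(Xᵅ)₂/ρ² and ∂fᵅ/∂ρ = (Xᵅ)₁/ρ², where (Xᵅ)₁, (Xᵅ)₂ are the two components of Xᵅ. -/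
theorem hasDerivAt_neg_add_sq_div {𝕜 : Type*} [NontriviallyNormedField 𝕜] (c : 𝕜) {ρ : 𝕜}
    (hρ : ρ ≠ 0) : HasDerivAt (fun r => -(c + r ^ 2) / r) ((c - ρ ^ 2) / ρ ^ 2) ρ := by
  have numerator : HasDerivAt (fun r => -(c + r ^ 2)) (-(2 * ρ)) ρ := by
    simpa using ((hasDerivAt_pow 2 ρ).const_add c).fun_neg
  exact (numerator.fun_div (hasDerivAt_id' ρ) hρ).congr_deriv (by ring)

/-- On the half-plane `ρ > 0`, the vector fields `X⁻ = (1, 0)`, `X⁰ = (x, ρ)`,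
`X⁺ = (x² − ρ², 2xρ)` are Hamiltonian with respect to the symplectic form
`ω = dx ∧ dρ / ρ²`, with Hamiltonian functions `f⁻ = −1/ρ`, `f⁰ = −x/ρ`,
`f⁺ = −(x² + ρ²)/ρ`: in components, `∂f/∂x = −X₂/ρ²` and `∂f/∂ρ = X₁/ρ²`. -/
theorem riccati_halfPlane_hamiltonian_vectorFields (x ρ : ℝ) (hρ : 0 < ρ) :
    (deriv (fun _ : ℝ => -1 / ρ) x = -(0 : ℝ) / ρ ^ 2 ∧
      deriv (fun ρ' : ℝ => -1 / ρ') ρ = (1 : ℝ) / ρ ^ 2) ∧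
    (deriv (fun x' : ℝ => -x' / ρ) x = -ρ / ρ ^ 2 ∧
      deriv (fun ρ' : ℝ => -x / ρ') ρ = x / ρ ^ 2) ∧
    (deriv (fun x' : ℝ => -(x' ^ 2 + ρ ^ 2) / ρ) x = -(2 * x * ρ) / ρ ^ 2 ∧
      deriv (fun ρ' : ℝ => -(x ^ 2 + ρ' ^ 2) / ρ') ρ = (x ^ 2 - ρ ^ 2) / ρ ^ 2) :=
  ⟨⟨by simp, by simp⟩, ⟨by simp [field], by simp⟩, by simp [field],
    (hasDerivAt_neg_add_sq_div _ hρ.ne').deriv⟩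
end
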